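/- Let n = 3 and let ω ∈ so(3) be nonzero. Then the adjoint orbit of E(3) through (ω,0), equipped with the subspace topology from so(3) × ℝ³, is homeomorphic to the set {(u,w) ∈ ℝ³ × ℝ³ : ‖u‖ = 1 and ⟨u,w⟩ = 0} (the tangent bundle of the 2-sphere, realized as a subspace of ℝ³ × ℝ³). -/

import Mathlib

open Matrix

abbrev Mat (n : ℕ) := Matrix (Fin n) (Fin n) ℝ
abbrev Vec (n : ℕ) := Fin n → ℝ

/-- `r` is an orthogonal matrix. -/
def IsOrth {n : ℕ} (r : Mat n) : Prop := r * rᵀ = 1 ∧ rᵀ * r = 1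

/-- `ω` is skew-symmetric. -/
def IsSkew {n : ℕ} (ω : Mat n) : Prop := ωᵀ = -ω

/-- Adjoint action of `(r,d) ∈ E(n)` on `(ω,v) ∈ so(n) × ℝⁿ`. -/
noncomputable def Ad {n : ℕ} (r : Mat n) (d : Vec n) (ω : Mat n) (v : Vec n) :
    Mat n × Vec n :=
  (r * ω * r⁻¹, r *ᵥ v - (r * ω * r⁻¹) *ᵥ d)

/-- The momentum map `μ(p,d) = ½(p dᵀ − d pᵀ)`. -/
noncomputable def mu {n : ℕ} (p d : Vec n) : Mat n :=
  (1/2 : ℝ) • (vecMulVec p d - vecMulVec d p)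

/-- Coadjoint action of `(r,d) ∈ E(n)` on `(L,p) ∈ so(n)* × (ℝⁿ)* ≃ so(n) × ℝⁿ`. -/
noncomputable def CoAd {n : ℕ} (r : Mat n) (d : Vec n) (L : Mat n) (p : Vec n) :
    Mat n × Vec n :=
  (r * L * r⁻¹ + mu (r *ᵥ p) d, r *ᵥ p)

/-!
Identify `so(3)` with `ℝ³` through `hat a = (v ↦ a ⨯₃ v)`. Conjugation by an orthogonal `r`
sends `hat a` to `hat (det r • r a)`, so the orbit of `(hat a, 0)` consists of the pairs
`(hat b, -(b ⨯₃ d))`. Householder reflections show that `b = det r • r a` covers the whole sphere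
`‖b‖ = ‖a‖`, and `d ↦ b ⨯₃ d` maps onto the plane `b⊥` because `b ⨯₃ (v ⨯₃ b) = ‖b‖² v` there.
Hence `(hat b, v) ↦ (b / ‖a‖, v)` identifies the orbit with the tangent bundle of the unit sphere.
-/

noncomputable section

section Householder

variable {n : ℕ}

def householder (u : Vec n) : Mat n := 1 - (2 / (u ⬝ᵥ u)) • vecMulVec u u

lemma householder_mulVec (u x : Vec n) :
    householder u *ᵥ x = x - (2 * (u ⬝ᵥ x) / (u ⬝ᵥ u)) • u := by
  rw [householder, sub_mulVec, one_mulVec, smul_mulVec, vecMulVec_mulVec, op_smul_eq_smul,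
    smul_smul]
  congr 2
  ring

lemma transpose_householder (u : Vec n) : (householder u)ᵀ = householder u := by
  simp [householder, transpose_vecMulVec]

lemma householder_mul_self {u : Vec n} (hu : u ≠ 0) : householder u * householder u = 1 := by
  have huu : u ⬝ᵥ u ≠ 0 := dotProduct_self_eq_zero.not.mpr hu
  refine ext_iff_mulVec.mpr fun x => ?_
  rw [← mulVec_mulVec, one_mulVec, householder_mulVec u (householder u *ᵥ x), householder_mulVec,
    dotProduct_sub, dotProduct_smul, smul_eq_mul, div_mul_cancel₀ _ huu]
  match_scalars
  field_simp
  ring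

lemma isOrth_householder {u : Vec n} (hu : u ≠ 0) : IsOrth (householder u) := by
  simp only [IsOrth, transpose_householder, householder_mul_self hu, and_self]

lemma det_householder {u : Vec n} (hu : u ≠ 0) : (householder u).det = -1 := by
  have huu : u ⬝ᵥ u ≠ 0 := dotProduct_self_eq_zero.not.mpr hu
  rw [householder, vecMulVec_eq Unit, sub_eq_add_neg, ← neg_smul, ← smul_mul,
    ← replicateCol_smul, det_one_add_replicateCol_mul_replicateRow,
    dotProduct_smul, smul_eq_mul, neg_mul, div_mul_cancel₀ _ huu]
  norm_num

lemma householder_mulVec_of_dotProduct_eq_zero {u x : Vec n} (h : u ⬝ᵥ x = 0) :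
    householder u *ᵥ x = x := by
  simp [householder_mulVec, h]

lemma householder_add_mulVec {a b : Vec n} (hab : a ⬝ᵥ a = b ⬝ᵥ b) (h : a + b ≠ 0) :
    householder (a + b) *ᵥ a = -b := by
  have key : (a + b) ⬝ᵥ (a + b) = 2 * ((a + b) ⬝ᵥ a) := by
    simp only [add_dotProduct, dotProduct_add, dotProduct_comm b a]
    linear_combination -hab
  rw [householder_mulVec, ← key, div_self (dotProduct_self_eq_zero.not.mpr h), one_smul]
  abel

lemma exists_isOrth_det_eq_neg_one_mulVec_eq_neg (hn : 2 ≤ n) {a b : Vec n}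
    (hab : a ⬝ᵥ a = b ⬝ᵥ b) : ∃ r : Mat n, IsOrth r ∧ r.det = -1 ∧ r *ᵥ a = -b := by
  by_cases h : a + b = 0
  · have := Fin.nontrivial_iff_two_le.mpr hn
    obtain ⟨u, hu, hua⟩ := exists_ne_zero_dotProduct_eq_zero a
    refine ⟨householder u, isOrth_householder hu, det_householder hu, ?_⟩
    rw [householder_mulVec_of_dotProduct_eq_zero hua, eq_neg_of_add_eq_zero_left h]
  · exact ⟨householder (a + b), isOrth_householder h, det_householder h,
      householder_add_mulVec hab h⟩

end Householder

namespace IsOrth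

variable {n : ℕ} {r : Mat n}

lemma inv_eq (hr : IsOrth r) : r⁻¹ = rᵀ := inv_eq_right_inv hr.1

lemma det_mul_self (hr : IsOrth r) : r.det * r.det = 1 := by
  simpa using congrArg det hr.2

lemma adjugate_eq (hr : IsOrth r) : adjugate r = r.det • rᵀ := by
  calc adjugate r = rᵀ * (r * adjugate r) := by rw [← Matrix.mul_assoc, hr.2, Matrix.one_mul]
    _ = r.det • rᵀ := by rw [mul_adjugate, Matrix.mul_smul, Matrix.mul_one]

lemma dotProduct_mulVec_mulVec (hr : IsOrth r) (x y : Vec n) :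
    r *ᵥ x ⬝ᵥ r *ᵥ y = x ⬝ᵥ y := by
  rw [dotProduct_mulVec, vecMul_mulVec, ← mulVec_transpose, hr.2, transpose_one, one_mulVec]

end IsOrth

def hat (a : Vec 3) : Mat 3 := !![0, -a 2, a 1; a 2, 0, -a 0; -a 1, a 0, 0]

def vee (Ω : Mat 3) : Vec 3 := ![Ω 2 1, Ω 0 2, Ω 1 0]

lemma hat_mulVec (a v : Vec 3) : hat a *ᵥ v = a ⨯₃ v := by
  ext i
  fin_cases i <;> simp [hat, cross_apply, mulVec, vecHead, vecTail] <;> ring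

lemma vee_hat (a : Vec 3) : vee (hat a) = a := by
  ext i
  fin_cases i <;> simp [hat, vee]

lemma hat_zero : hat 0 = 0 := by
  ext i j
  fin_cases i <;> fin_cases j <;> simp [hat]

lemma isSkew_hat (a : Vec 3) : IsSkew (hat a) := by
  ext i j
  fin_cases i <;> fin_cases j <;> simp [hat]

lemma IsSkew.hat_vee {Ω : Mat 3} (h : IsSkew Ω) : hat (vee Ω) = Ω := by
  have h' i j : Ω j i = -Ω i j := by simpa using congrFun₂ h i j
  ext i j
  fin_cases i <;> fin_cases j <;> simp [hat, vee] <;>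
    linarith [h' 0 0, h' 1 1, h' 2 2, h' 0 1, h' 0 2, h' 1 2]

lemma mul_hat_mul_transpose (A : Mat 3) (a : Vec 3) :
    A * hat a * Aᵀ = hat ((adjugate A)ᵀ *ᵥ a) := by
  ext i j
  fin_cases i <;> fin_cases j <;>
    (simp [hat, mul_apply, mulVec, adjugate_fin_three, Fin.sum_univ_three, dotProduct]; ring)

lemma IsOrth.mul_hat_mul_inv {r : Mat 3} (hr : IsOrth r) (a : Vec 3) :
    r * hat a * r⁻¹ = hat (r.det • r *ᵥ a) := by
  rw [hr.inv_eq, mul_hat_mul_transpose, hr.adjugate_eq, transpose_smul, transpose_transpose,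
    smul_mulVec]

@[fun_prop]
lemma continuous_hat : Continuous hat := by
  refine continuous_matrix fun i j => ?_
  fin_cases i <;> fin_cases j <;> simp [hat] <;> fun_prop

@[fun_prop]
lemma continuous_vee : Continuous vee := by
  refine continuous_pi fun i => ?_
  fin_cases i <;> simp [vee] <;> fun_prop

lemma Ad_hat_zero {r : Mat 3} (hr : IsOrth r) (d a : Vec 3) :
    Ad r d (hat a) 0 = (hat (r.det • r *ᵥ a), -((r.det • r *ᵥ a) ⨯₃ d)) := by
  rw [Ad, hr.mul_hat_mul_inv, mulVec_zero, zero_sub, hat_mulVec]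

lemma exists_cross_eq_of_dotProduct_eq_zero {b v : Vec 3} (hb : b ≠ 0) (hv : b ⬝ᵥ v = 0) :
    ∃ d, b ⨯₃ d = v := by
  refine ⟨(b ⬝ᵥ b)⁻¹ • (v ⨯₃ b), ?_⟩
  rw [map_smul, cross_cross_eq_smul_sub_smul', dotProduct_comm v, hv, zero_smul, sub_zero,
    smul_smul, inv_mul_cancel₀ (dotProduct_self_eq_zero.not.mpr hb), one_smul]

lemma setOf_Ad_hat_eq {a : Vec 3} (ha : a ≠ 0) :
    {x : Mat 3 × Vec 3 | ∃ (r : Mat 3) (d : Vec 3), IsOrth r ∧ Ad r d (hat a) 0 = x} =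
      {x | IsSkew x.1 ∧ vee x.1 ⬝ᵥ vee x.1 = a ⬝ᵥ a ∧ vee x.1 ⬝ᵥ x.2 = 0} := by
  ext ⟨Ω, v⟩
  constructor
  · rintro ⟨r, d, hr, hx⟩
    obtain ⟨rfl, rfl⟩ := Prod.mk.inj (Ad_hat_zero hr d a ▸ hx)
    refine ⟨isSkew_hat _, ?_, ?_⟩
    · simp only [vee_hat, dotProduct_smul, smul_dotProduct, smul_eq_mul,
        hr.dotProduct_mulVec_mulVec, ← mul_assoc, hr.det_mul_self, one_mul]
    · rw [vee_hat, dotProduct_neg, dot_self_cross, neg_zero]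
  · rintro ⟨hΩ, hnorm, hperp⟩
    have hb : vee Ω ≠ 0 := by
      rintro h
      rw [h, dotProduct_zero, eq_comm, dotProduct_self_eq_zero] at hnorm
      exact ha hnorm
    obtain ⟨r, hr, hdet, hra⟩ :=
      exists_isOrth_det_eq_neg_one_mulVec_eq_neg (by norm_num) hnorm.symm
    obtain ⟨d, hd⟩ := exists_cross_eq_of_dotProduct_eq_zero hb hperp
    refine ⟨r, -d, hr, ?_⟩
    rw [Ad_hat_zero hr, hdet, hra, neg_smul, one_smul, neg_neg, map_neg, neg_neg, hd,
      hΩ.hat_vee]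

open scoped RealInnerProductSpace
open WithLp

lemma norm_toLp_sq {n : ℕ} (x : Vec n) :
    ‖(toLp 2 x : EuclideanSpace ℝ (Fin n))‖ ^ 2 = x ⬝ᵥ x := by
  rw [← real_inner_self_eq_norm_sq, EuclideanSpace.inner_toLp_toLp, star_trivial]

def tangentSphereChart {c : ℝ} (hc : c ≠ 0) :
    PartialHomeomorph (Mat 3 × Vec 3) (EuclideanSpace ℝ (Fin 3) × EuclideanSpace ℝ (Fin 3)) where
  toFun x := (toLp 2 (c⁻¹ • vee x.1), toLp 2 x.2)
  invFun y := (hat (c • ofLp y.1), ofLp y.2)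
  source := {x | IsSkew x.1 ∧ vee x.1 ⬝ᵥ vee x.1 = c ^ 2 ∧ vee x.1 ⬝ᵥ x.2 = 0}
  target := {y | ‖y.1‖ = 1 ∧ ⟪y.1, y.2⟫ = 0}
  map_source' := by
    rintro ⟨Ω, v⟩ ⟨-, hnorm, hperp⟩
    refine ⟨?_, ?_⟩
    · rw [← pow_eq_one_iff_of_nonneg (norm_nonneg _) two_ne_zero, norm_toLp_sq, dotProduct_smul,
        smul_dotProduct, hnorm, smul_eq_mul, smul_eq_mul]
      field_simp
    · rw [EuclideanSpace.inner_toLp_toLp, star_trivial, dotProduct_smul, dotProduct_comm, hperp,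
        smul_zero]
  map_target' := by
    rintro ⟨u, w⟩ ⟨hu, huw⟩
    refine ⟨isSkew_hat _, ?_, ?_⟩
    · rw [vee_hat, dotProduct_smul, smul_dotProduct, ← norm_toLp_sq, toLp_ofLp, hu, smul_eq_mul,
        smul_eq_mul]
      ring
    · rw [vee_hat, smul_dotProduct, dotProduct_comm, ← star_trivial (ofLp u),
        ← EuclideanSpace.inner_eq_star_dotProduct, huw, smul_zero]
  left_inv' := by
    rintro ⟨Ω, v⟩ ⟨hΩ, -, -⟩
    simp [smul_smul, hc, hΩ.hat_vee]
  right_inv' := by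
    rintro ⟨u, w⟩ -
    simp [vee_hat, smul_smul, hc]
  continuousOn_toFun := by fun_prop
  continuousOn_invFun := by fun_prop

open scoped RealInnerProductSpace in
/-- For nonzero `ω ∈ so(3)`, the adjoint orbit of `E(3)` through `(ω,0)` is homeomorphic
to the tangent bundle of the 2-sphere. -/
theorem stmt18 (ω : Mat 3) (hω : IsSkew ω) (hne : ω ≠ 0) :
    Nonempty
      (({x : Mat 3 × Vec 3 | ∃ (r : Mat 3) (d : Vec 3), IsOrth r ∧ Ad r d ω 0 = x}) ≃ₜ
       ({y : EuclideanSpace ℝ (Fin 3) × EuclideanSpace ℝ (Fin 3) |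
          ‖y.1‖ = 1 ∧ ⟪y.1, y.2⟫ = 0})) := by
  obtain ⟨a, rfl⟩ : ∃ a, hat a = ω := ⟨vee ω, hω.hat_vee⟩
  have ha : a ≠ 0 := by
    rintro rfl
    exact hne hat_zero
  have hc : ‖(toLp 2 a : EuclideanSpace ℝ (Fin 3))‖ ≠ 0 := by simpa using ha
  rw [setOf_Ad_hat_eq ha, ← norm_toLp_sq]
  exact ⟨(tangentSphereChart hc).toHomeomorphSourceTarget⟩
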